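/- Let G be a finite directed graph (possibly containing directed cycles) and let i, j be two vertices of G. Then i is an ancestor of j in G (i ∈ AN_G(j)) if and only if there exists an acyclification G' of G with i ∈ AN_{G'}(j). Equivalently, AN_G(j) is the union, over all acyclifications G' of G, of AN_{G'}(j). -/

import Mathlib

/-!
Directed (possibly cyclic) graphs on a vertex type `V` are given by their
edge relation `E : V → V → Prop`.
-/

/-- `Anc E i j` : `i` is an ancestor of `j` in the graph with edge relation `E`,
i.e. there is a directed path (possibly of length 0) from `i` to `j`. -/
def Anc {V : Type*} (E : V → V → Prop) (i j : V) : Prop :=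
  Relation.ReflTransGen E i j

/-- `InSC E i j` : `i` belongs to the strongly connected component of `j`,
i.e. `i ∈ AN_G(j) ∩ DE_G(j)`. -/
def InSC {V : Type*} (E : V → V → Prop) (i j : V) : Prop :=
  Anc E i j ∧ Anc E j i

/-- A directed graph is acyclic if it contains no directed cycle. -/
def Acyclic {V : Type*} (E : V → V → Prop) : Prop :=
  ∀ i, ¬ Relation.TransGen E i i

/-- `G' = (V, E')` is an acyclification of `G = (V, E)`:
`G'` is acyclic; for `i ∉ SC_G(j)`, `i → j ∈ E'` iff some `k ∈ SC_G(j)` has `i → k ∈ E`;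
and for distinct `i ∈ SC_G(j)`, `i → j ∈ E'` or `j → i ∈ E'`. -/
def IsAcyclification {V : Type*} (E E' : V → V → Prop) : Prop :=
  Acyclic E' ∧
  (∀ i j, ¬ InSC E i j → (E' i j ↔ ∃ k, InSC E k j ∧ E i k)) ∧
  (∀ i j, i ≠ j → InSC E i j → (E' i j ∨ E' j i))

/-- A walk in the graph with edge relation `E`: a sequence of `len + 1` vertices
`v 0, …, v len` together with edge directions `d 0, …, d (len - 1)`;
if `d k = true` the `k`-th edge is `v k → v (k+1) ∈ E`, otherwise it is
`v (k+1) → v k ∈ E`.  Vertices and edges may repeat. -/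
structure Walk {V : Type*} (E : V → V → Prop) where
  len : ℕ
  v : ℕ → V
  d : ℕ → Bool
  valid : ∀ k, k < len →
    (d k = true → E (v k) (v (k + 1))) ∧ (d k = false → E (v (k + 1)) (v k))

/-- The interior node at position `k` (with `0 < k < w.len`) is a collider on the
walk: both adjacent edges point into it. -/
def IsCollider {V : Type*} {E : V → V → Prop} (w : Walk E) (k : ℕ) : Prop :=
  w.d (k - 1) = true ∧ w.d k = false

/-- `x` is an ancestor of the set `C`. -/
def AncOfSet {V : Type*} (E : V → V → Prop) (C : Set V) (x : V) : Prop :=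
  ∃ c ∈ C, Anc E x c

/-- The walk `w` is d-blocked by the set `C`. -/
def DBlocked {V : Type*} (E : V → V → Prop) (C : Set V) (w : Walk E) : Prop :=
  w.v 0 ∈ C ∨ w.v w.len ∈ C ∨
  ∃ k, 0 < k ∧ k < w.len ∧
    ((IsCollider w k ∧ ¬ AncOfSet E C (w.v k)) ∨
     (¬ IsCollider w k ∧ w.v k ∈ C))

/-- The walk `w` is σ-blocked by the set `C`. -/
def SigmaBlocked {V : Type*} (E : V → V → Prop) (C : Set V) (w : Walk E) : Prop :=
  w.v 0 ∈ C ∨ w.v w.len ∈ C ∨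
  ∃ k, 0 < k ∧ k < w.len ∧
    ((IsCollider w k ∧ ¬ AncOfSet E C (w.v k)) ∨
     (w.v k ∈ C ∧
       ((w.d (k - 1) = true ∧ w.d k = true ∧ ¬ InSC E (w.v (k + 1)) (w.v k)) ∨
        (w.d (k - 1) = false ∧ w.d k = false ∧ ¬ InSC E (w.v (k - 1)) (w.v k)) ∨
        (w.d (k - 1) = false ∧ w.d k = true ∧
          (¬ InSC E (w.v (k - 1)) (w.v k) ∨ ¬ InSC E (w.v (k + 1)) (w.v k))))))

/-- `A` is d-separated from `B` by `C` in the graph with edge relation `E`. -/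
def DSep {V : Type*} (E : V → V → Prop) (A B C : Set V) : Prop :=
  ∀ w : Walk E, w.v 0 ∈ A → w.v w.len ∈ B → DBlocked E C w

/-- `A` is σ-separated from `B` by `C` in the graph with edge relation `E`. -/
def SigmaSep {V : Type*} (E : V → V → Prop) (A B C : Set V) : Prop :=
  ∀ w : Walk E, w.v 0 ∈ A → w.v w.len ∈ B → SigmaBlocked E C w

/-- The independence model under d-separation. -/
def IMd {V : Type*} (E : V → V → Prop) : Set (Set V × Set V × Set V) :=
  {t | DSep E t.1 t.2.1 t.2.2}

/-- The independence model under σ-separation. -/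
def IMsigma {V : Type*} (E : V → V → Prop) : Set (Set V × Set V × Set V) :=
  {t | SigmaSep E t.1 t.2.1 t.2.2}

/-!
Every edge `x → y` of an acyclification has `x ∈ AN_G(y)`: either `x ∈ SC_G(y)`, or
`x → k ∈ E` for some `k ∈ SC_G(y)`. Hence acyclifications have no ancestors that `G` lacks.

Conversely, to capture all descendants of `i` at once, orient each strongly connected component
along a linear extension of the condensation order in which `i` comes first within its component.
Then `i` has an edge to every other vertex of `SC_G(i)`, and whenever a path of `G` from `i`
enters a new component through `b → c`, the acyclification has an edge from `b` to every vertex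
of `SC_G(c)`.
-/

section

variable {V : Type*} {E : V → V → Prop}

lemma InSC.refl (E : V → V → Prop) (x : V) : InSC E x x :=
  ⟨.refl, .refl⟩

lemma InSC.symm {x y : V} (h : InSC E x y) : InSC E y x :=
  ⟨h.2, h.1⟩

lemma Anc.of_isAcyclification {E' : V → V → Prop} (h : IsAcyclification E E') {x y : V}
    (hxy : Anc E' x y) : Anc E x y := by
  induction hxy with
  | refl => exact .refl
  | @tail b c _ hbc ih =>
    refine ih.trans ?_
    by_cases hsc : InSC E b c
    · exact hsc.1
    · obtain ⟨k, hkc, hbk⟩ := (h.2.1 b c hsc).1 hbc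
      exact .head hbk hkc.1

lemma acyclic_of_forall_ne_and {s : V → V → Prop} [IsPartialOrder V s]
    (h : ∀ x y, E x y → x ≠ y ∧ s x y) : Acyclic E := by
  have : IsTrans V (fun x y => x ≠ y ∧ s x y) :=
    ⟨fun _ _ _ ⟨hab, sab⟩ ⟨_, sbc⟩ =>
      ⟨fun hac => hab (antisymm sab (hac ▸ sbc)), _root_.trans sab sbc⟩⟩
  exact fun x hx => (Relation.transGen_minimal h x x hx).1 rfl

def acyclifyBy (E s : V → V → Prop) (x y : V) : Prop :=
  (InSC E x y ∧ x ≠ y ∧ s x y) ∨ (¬ InSC E x y ∧ ∃ k, InSC E k y ∧ E x k)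

section acyclifyBy

variable {s : V → V → Prop}

lemma ne_and_of_acyclifyBy (hs : ∀ x y, Anc E x y → ¬ InSC E x y → s x y) {x y : V}
    (h : acyclifyBy E s x y) : x ≠ y ∧ s x y := by
  rcases h with ⟨-, h⟩ | ⟨hsc, k, hky, hxk⟩
  · exact h
  · exact ⟨fun hxy => hsc (hxy ▸ InSC.refl E x), hs x y (.head hxk hky.1) hsc⟩

lemma isAcyclification_acyclifyBy [IsLinearOrder V s]
    (hs : ∀ x y, Anc E x y → ¬ InSC E x y → s x y) :
    IsAcyclification E (acyclifyBy E s) := by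
  refine ⟨acyclic_of_forall_ne_and (s := s) fun x y => ne_and_of_acyclifyBy hs,
    fun x y hsc => ⟨fun h => (h.resolve_left fun h => hsc h.1).2, fun h => .inr ⟨hsc, h⟩⟩,
    fun x y hne hsc => ?_⟩
  rcases total_of s x y with h | h
  · exact .inl (.inl ⟨hsc, hne, h⟩)
  · exact .inr (.inl ⟨hsc.symm, hne.symm, h⟩)

lemma anc_acyclifyBy_of_anc {i j : V} (hi : ∀ y, InSC E i y → s i y) (hij : Anc E i j) :
    Anc (acyclifyBy E s) i j := by
  -- Strengthened so that the induction can jump to any vertex of the current component.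
  suffices ∀ z, Anc E i z → ∀ y, InSC E z y → Anc (acyclifyBy E s) i y from
    this j hij j (InSC.refl E j)
  intro z hiz
  induction hiz with
  | refl =>
    intro y hiy
    by_cases hne : i = y
    · exact hne ▸ .refl
    · exact .single (.inl ⟨hiy, hne, hi y hiy⟩)
  | @tail b c _ hbc ih =>
    intro y hcy
    by_cases hby : InSC E b y
    · exact ih y hby
    · exact .tail (ih b (InSC.refl E b)) (.inr ⟨hby, c, hcy, hbc⟩)

end acyclifyBy

def condensationOrderFrom (E : V → V → Prop) (i x y : V) : Prop :=
  Anc E x y ∧ (InSC E x y → x = y ∨ x = i)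

instance (i : V) : IsPartialOrder V (condensationOrderFrom E i) where
  refl _ := ⟨.refl, fun _ => .inl rfl⟩
  trans x y z := by
    rintro ⟨hxy, hxy'⟩ ⟨hyz, hyz'⟩
    refine ⟨hxy.trans hyz, fun hxz => ?_⟩
    rcases hxy' ⟨hxy, hyz.trans hxz.2⟩ with rfl | rfl
    · exact hyz' ⟨hyz, hxz.2⟩
    · exact .inr rfl
  antisymm x y := by
    rintro ⟨hxy, hxy'⟩ ⟨_, hyx'⟩
    rcases hxy' ⟨hxy, ‹_›⟩ with h | rfl
    · exact h
    · exact (hyx' ⟨‹_›, hxy⟩).elim Eq.symm Eq.symm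

lemma exists_isAcyclification_forall_anc (E : V → V → Prop) (i : V) :
    ∃ E', IsAcyclification E E' ∧ ∀ j, Anc E i j → Anc E' i j := by
  obtain ⟨s, hs, hle⟩ := extend_partialOrder (condensationOrderFrom E i)
  exact ⟨acyclifyBy E s,
    isAcyclification_acyclifyBy fun x y hxy hsc => hle x y ⟨hxy, fun h => absurd h hsc⟩,
    fun j => anc_acyclifyBy_of_anc fun y hiy => hle i y ⟨hiy.1, fun _ => .inr rfl⟩⟩

end

theorem ancestor_iff_exists_acyclification_general {V : Type*}
    (E : V → V → Prop) :
    (∀ i j : V, Anc E i j ↔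
      ∃ E' : V → V → Prop, IsAcyclification E E' ∧ Anc E' i j) ∧
    (∀ j : V, {i | Anc E i j} =
      ⋃ E' ∈ {E' : V → V → Prop | IsAcyclification E E'}, {i | Anc E' i j}) := by
  have key : ∀ i j : V, Anc E i j ↔
      ∃ E' : V → V → Prop, IsAcyclification E E' ∧ Anc E' i j := fun i j =>
    ⟨fun h => (exists_isAcyclification_forall_anc E i).imp fun _ hE' => ⟨hE'.1, hE'.2 j h⟩,
      fun ⟨_, hE', h⟩ => h.of_isAcyclification hE'⟩
  refine ⟨key, fun j => Set.ext fun i => ?_⟩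
  simpa using key i j

/-- `i ∈ AN_G(j)` iff there exists an acyclification `G'` of `G`
with `i ∈ AN_{G'}(j)`; equivalently `AN_G(j)` is the union of `AN_{G'}(j)` over
all acyclifications `G'` of `G`. -/
theorem ancestor_iff_exists_acyclification {V : Type*} [Fintype V]
    (E : V → V → Prop) (hE : ∀ v, ¬ E v v) :
    (∀ i j : V, Anc E i j ↔
      ∃ E' : V → V → Prop, IsAcyclification E E' ∧ Anc E' i j) ∧
    (∀ j : V, {i | Anc E i j} =
      ⋃ E' ∈ {E' : V → V → Prop | IsAcyclification E E'}, {i | Anc E' i j}) :=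
  ancestor_iff_exists_acyclification_general E
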